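/- arXiv:2405.11918 — 2 statements merged into one kernel-verified Lean document; each statement's English description precedes it below -/
import Mathlib

section
/- Let G be a finite connected graph of diameter 2 and x a vertex of G such that G − x also has diameter 2. Then gp(G) − 1 ≤ gp(G − x) ≤ gp(G). -/
open SimpleGraph

/-- `S` is a *general position set* of `G`: no three distinct vertices of `S`
lie on a common shortest path (geodesic) of `G`. -/
def IsGPSet {V : Type*} (G : SimpleGraph V) (S : Set V) : Prop :=
  ∀ ⦃u v w : V⦄, u ∈ S → v ∈ S → w ∈ S → u ≠ v → u ≠ w → v ≠ w →
    ∀ p : G.Walk u v, p.IsPath → p.length = G.dist u v → w ∉ p.support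

/-- The *general position number* of `G`: the maximum cardinality of a
general position set. -/
noncomputable def gpNum {V : Type*} [Fintype V] (G : SimpleGraph V) : ℕ :=
  sSup {n : ℕ | ∃ S : Finset V, IsGPSet G ↑S ∧ S.card = n}

/-- The vertex-deleted subgraph `G - x`, induced on `V(G) \ {x}`. -/
def delVert {V : Type*} (G : SimpleGraph V) (x : V) : SimpleGraph {y : V // y ≠ x} :=
  G.comap Subtype.val

/-!
If all distances are at most 2, a geodesic with an interior vertex `w` is a path `u - w - v`
with `u, v` non-adjacent. So `S` is in general position exactly when no two non-adjacent vertices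
of `S` have a common neighbour in `S`, a condition that only involves adjacency inside `S`.
Since `G - x` also has diameter 2 and is an induced subgraph, a set avoiding `x` is in general
position in `G - x` iff it is in `G`; a maximum one of `G - x` is thus one of `G`, and a maximum
one of `G` loses at most `x` when passed to `G - x`.
-/

namespace SimpleGraph

variable {V : Type*} {G : SimpleGraph V} {u v w : V}

lemma Walk.adj_adj_of_mem_support_of_length_le_two (p : G.Walk u v) (hp : p.length ≤ 2)
    (hw : w ∈ p.support) (hwu : w ≠ u) (hwv : w ≠ v) :
    p.length = 2 ∧ G.Adj u w ∧ G.Adj w v := by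
  rcases p with _ | ⟨h₁, _ | ⟨h₂, _ | ⟨_, q⟩⟩⟩ <;> simp_all

lemma dist_eq_two_of_adj_of_adj (h₁ : G.Adj u w) (h₂ : G.Adj w v) (huv : u ≠ v)
    (hnadj : ¬ G.Adj u v) : G.dist u v = 2 := by
  have hle := dist_le (.cons h₁ (.cons h₂ .nil))
  have hlt := Reachable.one_lt_dist_of_ne_of_not_adj ⟨.cons h₁ (.cons h₂ .nil)⟩ huv hnadj
  simp only [Walk.length_cons, Walk.length_nil] at hle
  omega

lemma dist_le_two_of_diam_eq_two (h : G.diam = 2) (u v : V) : G.dist u v ≤ 2 :=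
  h ▸ dist_le_diam (ediam_ne_top_of_diam_ne_zero (by omega))

end SimpleGraph

section GeneralPosition

variable {V : Type*} {G : SimpleGraph V}

lemma isGPSet_empty : IsGPSet G ∅ := fun _ _ _ hu => hu.elim

lemma IsGPSet.mono {S T : Set V} (hS : IsGPSet G S) (hTS : T ⊆ S) : IsGPSet G T :=
  fun _ _ _ hu hv hw => hS (hTS hu) (hTS hv) (hTS hw)

theorem isGPSet_iff_of_dist_le_two (hG : ∀ u v, G.dist u v ≤ 2) {S : Set V} :
    IsGPSet G S ↔ ∀ ⦃u v w⦄, u ∈ S → v ∈ S → w ∈ S → u ≠ v →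
      G.Adj u w → G.Adj w v → G.Adj u v := by
  constructor
  · intro hS u v w hu hv hw huv h₁ h₂
    by_contra hnadj
    refine hS hu hv hw huv h₁.ne h₂.ne.symm (.cons h₁ (.cons h₂ .nil)) ?_
      (by simp [dist_eq_two_of_adj_of_adj h₁ h₂ huv hnadj]) (by simp)
    simp [Walk.cons_isPath_iff, h₁.ne, h₂.ne, huv]
  · intro h u v w hu hv hw huv huw hvw p _ hlen hwp
    obtain ⟨hl2, h₁, h₂⟩ :=
      p.adj_adj_of_mem_support_of_length_le_two (hlen ▸ hG u v) hwp huw.symm hvw.symm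
    have := dist_eq_one_iff_adj.mpr (h hu hv hw huv h₁ h₂)
    omega

theorem isGPSet_delVert_iff {x : V} (hG : ∀ u v, G.dist u v ≤ 2)
    (hGx : ∀ u v, (delVert G x).dist u v ≤ 2) {S : Set {y // y ≠ x}} :
    IsGPSet (delVert G x) S ↔ IsGPSet G (Subtype.val '' S) := by
  rw [isGPSet_iff_of_dist_le_two hGx, isGPSet_iff_of_dist_le_two hG]
  constructor
  · rintro h _ _ _ ⟨u, hu, rfl⟩ ⟨v, hv, rfl⟩ ⟨w, hw, rfl⟩ huv
    exact h hu hv hw (ne_of_apply_ne _ huv)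
  · intro h u v w hu hv hw huv
    exact h ⟨u, hu, rfl⟩ ⟨v, hv, rfl⟩ ⟨w, hw, rfl⟩ (Subtype.val_injective.ne huv)

variable [Fintype V]

lemma bddAbove_gpSizes (G : SimpleGraph V) :
    BddAbove {n : ℕ | ∃ S : Finset V, IsGPSet G ↑S ∧ S.card = n} :=
  ⟨Fintype.card V, by rintro _ ⟨S, -, rfl⟩; exact S.card_le_univ⟩

lemma IsGPSet.card_le_gpNum {S : Finset V} (hS : IsGPSet G S) : S.card ≤ gpNum G :=
  le_csSup (bddAbove_gpSizes G) ⟨S, hS, rfl⟩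

lemma exists_isGPSet_card_eq_gpNum (G : SimpleGraph V) :
    ∃ S : Finset V, IsGPSet G S ∧ S.card = gpNum G := by
  have hne : {n : ℕ | ∃ S : Finset V, IsGPSet G ↑S ∧ S.card = n}.Nonempty :=
    ⟨0, ∅, by simpa using isGPSet_empty, rfl⟩
  exact Nat.sSup_mem hne (bddAbove_gpSizes G)

end GeneralPosition

theorem stmt_7_general {V : Type*} [Fintype V] [DecidableEq V] (G : SimpleGraph V)
    (hdiam : G.diam = 2) (x : V)
    (hdiam' : (delVert G x).diam = 2) :
    gpNum G - 1 ≤ gpNum (delVert G x) ∧ gpNum (delVert G x) ≤ gpNum G := by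
  have hd := dist_le_two_of_diam_eq_two hdiam
  have hd' := dist_le_two_of_diam_eq_two hdiam'
  constructor
  · obtain ⟨S, hS, hcard⟩ := exists_isGPSet_card_eq_gpNum G
    have hS' : IsGPSet (delVert G x) ↑(S.subtype (· ≠ x)) := by
      refine (isGPSet_delVert_iff hd hd').2 (hS.mono ?_)
      rintro _ ⟨y, hy, rfl⟩
      exact Finset.mem_subtype.1 hy
    calc gpNum G - 1 = S.card - 1 := by rw [hcard]
      _ ≤ (S.erase x).card := Finset.pred_card_le_card_erase
      _ = (S.subtype (· ≠ x)).card := by rw [Finset.card_subtype, Finset.filter_ne']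
      _ ≤ gpNum (delVert G x) := hS'.card_le_gpNum
  · obtain ⟨S, hS, hcard⟩ := exists_isGPSet_card_eq_gpNum (delVert G x)
    have hS' : IsGPSet G ↑(S.map (Function.Embedding.subtype _)) := by
      rw [Finset.coe_map]; exact (isGPSet_delVert_iff hd hd').1 hS
    calc gpNum (delVert G x) = (S.map (Function.Embedding.subtype _)).card := by
          rw [Finset.card_map, hcard]
      _ ≤ gpNum G := hS'.card_le_gpNum

/-- If `G` is a finite connected graph of diameter 2 and `x` a
vertex such that `G - x` also has diameter 2, then
`gp(G) - 1 ≤ gp(G - x) ≤ gp(G)`. -/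
theorem stmt_7 {V : Type*} [Fintype V] [DecidableEq V] (G : SimpleGraph V)
    (hG : G.Connected) (hdiam : G.diam = 2) (x : V)
    (hdiam' : (delVert G x).diam = 2) :
    gpNum G - 1 ≤ gpNum (delVert G x) ∧ gpNum (delVert G x) ≤ gpNum G :=
  stmt_7_general G hdiam x hdiam'
end

section
/- For m ≥ 3, let G_m be the graph obtained from the complete graph K_m with two fixed vertices x, y by adding two new vertices x', y' and the edges x'y', x'x, y'y, and x'y. Let e = xx'. Then diam(G_m) = 2, gp(G_m) = m, and gp(G_m − e) = m + 1 = gp(G_m) + 1. -/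
open SimpleGraph

/-- The graph `G_m`: the complete graph `K_m` (vertices `Sum.inl a`,
`a : Fin m`) with two fixed vertices `x, y : Fin m`, together with two new
vertices `x' = Sum.inr false` and `y' = Sum.inr true` and the additional edges
`x'y'`, `x'x`, `y'y`, and `x'y`. -/
def GmGraph (m : ℕ) (x y : Fin m) : SimpleGraph (Fin m ⊕ Bool) :=
  SimpleGraph.fromRel (fun p q =>
    match p, q with
    | Sum.inl _, Sum.inl _ => True
    | Sum.inr false, Sum.inr true => True
    | Sum.inr false, Sum.inl a => a = x ∨ a = y
    | Sum.inr true, Sum.inl a => a = y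
    | _, _ => False)

section Aux

variable {V : Type*} {G : SimpleGraph V}

lemma walk_len1_support {u v : V} (p : G.Walk u v) (h : p.length = 1) :
    p.support = [u, v] := by
  cases p with
  | nil => simp at h
  | cons ha q =>
    cases q with
    | nil => simp
    | cons hb r => simp [SimpleGraph.Walk.length_cons] at h

lemma walk_len2_support {u v : V} (p : G.Walk u v) (h : p.length = 2) :
    ∃ z, G.Adj u z ∧ G.Adj z v ∧ p.support = [u, z, v] := by
  cases p with
  | nil => simp at h
  | cons ha q =>
    cases q with
    | nil => simp at h
    | cons hb r =>
      cases r with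
      | nil => exact ⟨_, ha, hb, by simp⟩
      | cons hc s => simp [SimpleGraph.Walk.length_cons] at h

lemma dist_eq_two' {u v z : V} (hne : u ≠ v) (hna : ¬ G.Adj u v)
    (h1 : G.Adj u z) (h2 : G.Adj z v) : G.dist u v = 2 := by
  have hle : G.dist u v ≤ 2 := by
    simpa using SimpleGraph.dist_le (Walk.cons h1 (Walk.cons h2 Walk.nil))
  have h0 : G.dist u v ≠ 0 := by
    intro h
    have hr : G.Reachable u v := ⟨Walk.cons h1 (Walk.cons h2 Walk.nil)⟩
    exact hne (hr.dist_eq_zero_iff.mp h)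
  have h1' : G.dist u v ≠ 1 := fun h => hna (SimpleGraph.dist_eq_one_iff_adj.mp h)
  omega

lemma gp_viol {T : Finset V} (hT : IsGPSet G ↑T)
    {u v w : V} (hu : u ∈ T) (hv : v ∈ T) (hw : w ∈ T)
    (huv : u ≠ v) (huw : u ≠ w) (hvw : v ≠ w)
    (hna : ¬ G.Adj u v) (h1 : G.Adj u w) (h2 : G.Adj w v) : False := by
  have hd := dist_eq_two' huv hna h1 h2
  have hpath : (Walk.cons h1 (Walk.cons h2 Walk.nil)).IsPath := by
    simp [Walk.isPath_def, huv, huw, hvw.symm]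
  have hlen : (Walk.cons h1 (Walk.cons h2 Walk.nil)).length = G.dist u v := by
    simp [hd]
  have := hT (by simpa using hu) (by simpa using hv) (by simpa using hw)
    huv huw hvw _ hpath hlen
  exact this (by simp)

lemma gpNum_eq_of [Fintype V] (G : SimpleGraph V) (k : ℕ)
    (S : Finset V) (hS : IsGPSet G ↑S) (hcard : S.card = k)
    (hub : ∀ T : Finset V, IsGPSet G ↑T → T.card ≤ k) : gpNum G = k := by
  apply le_antisymm
  · exact csSup_le ⟨k, S, hS, hcard⟩ (by rintro n ⟨T, hT, rfl⟩; exact hub T hT)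
  · exact le_csSup ⟨Fintype.card V, by rintro n ⟨T, hT, rfl⟩; exact T.card_le_univ⟩
      ⟨S, hS, hcard⟩

lemma mem_of_card_big [Fintype V] [DecidableEq V] {T : Finset V} {v u : V}
    (hc : Fintype.card V ≤ T.card + 1) (hv : v ∉ T) (huv : u ≠ v) : u ∈ T := by
  by_contra hu
  have h2 : ({u, v} : Finset V) ⊆ Tᶜ := by
    intro z hz
    simp only [Finset.mem_insert, Finset.mem_singleton] at hz
    rcases hz with rfl | rfl <;> simpa
  have hle := Finset.card_le_card h2
  rw [Finset.card_compl, Finset.card_pair huv] at hle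
  have := T.card_le_univ
  omega

end Aux

section GmAux

variable {m : ℕ} {x y : Fin m}

lemma gm_adj_inl_inl {a b : Fin m} :
    (GmGraph m x y).Adj (Sum.inl a) (Sum.inl b) ↔ a ≠ b := by
  simp [GmGraph]

lemma gm_adj_inl_xp {a : Fin m} :
    (GmGraph m x y).Adj (Sum.inl a) (Sum.inr false) ↔ a = x ∨ a = y := by
  simp [GmGraph]

lemma gm_adj_inl_yp {a : Fin m} :
    (GmGraph m x y).Adj (Sum.inl a) (Sum.inr true) ↔ a = y := by
  simp [GmGraph]

lemma gm_adj_xp_yp : (GmGraph m x y).Adj (Sum.inr false) (Sum.inr true) := by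
  simp [GmGraph]

lemma del_il_il (a b : Fin m) :
    ((GmGraph m x y).deleteEdges {s(Sum.inl x, Sum.inr false)}).Adj
      (Sum.inl a) (Sum.inl b) ↔ a ≠ b := by
  simp [GmGraph, Sym2.eq_iff]

lemma del_il_xp (hxy : x ≠ y) (a : Fin m) :
    ((GmGraph m x y).deleteEdges {s(Sum.inl x, Sum.inr false)}).Adj
      (Sum.inl a) (Sum.inr false) ↔ a = y := by
  have hx : a = y → ¬ a = x := fun h1 h2 => hxy (by rw [← h1, ← h2])
  simp [GmGraph, Sym2.eq_iff]
  tauto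

lemma del_il_yp (a : Fin m) :
    ((GmGraph m x y).deleteEdges {s(Sum.inl x, Sum.inr false)}).Adj
      (Sum.inl a) (Sum.inr true) ↔ a = y := by
  simp [GmGraph, Sym2.eq_iff]

lemma del_xp_yp :
    ((GmGraph m x y).deleteEdges {s(Sum.inl x, Sum.inr false)}).Adj
      (Sum.inr false) (Sum.inr true) := by
  simp [GmGraph, Sym2.eq_iff]

end GmAux

/-- For `m ≥ 3` and distinct `x, y` in `K_m`, with `e = xx'`:
`diam(G_m) = 2`, `gp(G_m) = m`, and `gp(G_m - e) = m + 1 = gp(G_m) + 1`. -/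
theorem stmt_18 (m : ℕ) (hm : 3 ≤ m) (x y : Fin m) (hxy : x ≠ y) :
    (GmGraph m x y).diam = 2 ∧
    gpNum (GmGraph m x y) = m ∧
    gpNum ((GmGraph m x y).deleteEdges {s(Sum.inl x, Sum.inr false)}) = m + 1 ∧
    gpNum ((GmGraph m x y).deleteEdges {s(Sum.inl x, Sum.inr false)}) =
      gpNum (GmGraph m x y) + 1 := by
  have hcardV : Fintype.card (Fin m ⊕ Bool) = m + 2 := by simp
  -- PART 1 : diam = 2
  have hub : ∀ u : Fin m ⊕ Bool, (GmGraph m x y).edist u (Sum.inl y) ≤ 1 := by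
    rintro (a | b)
    · by_cases h : a = y
      · subst h; simp
      · exact le_of_eq (edist_eq_one_iff_adj.mpr (gm_adj_inl_inl.mpr h))
    · cases b
      · exact le_of_eq (edist_eq_one_iff_adj.mpr (gm_adj_inl_xp.mpr (Or.inr rfl)).symm)
      · exact le_of_eq (edist_eq_one_iff_adj.mpr (gm_adj_inl_yp.mpr rfl).symm)
  have hed : (GmGraph m x y).ediam ≤ 2 := by
    apply ediam_le_of_edist_le
    intro u v
    calc (GmGraph m x y).edist u v
        ≤ (GmGraph m x y).edist u (Sum.inl y) + (GmGraph m x y).edist (Sum.inl y) v :=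
          SimpleGraph.edist_triangle
      _ ≤ 1 + 1 := add_le_add (hub u) (by rw [SimpleGraph.edist_comm]; exact hub v)
      _ = 2 := by norm_num
  have hne_top : (GmGraph m x y).ediam ≠ ⊤ := fun h => by
    rw [h] at hed; exact absurd hed (by simp)
  have hd2 : (GmGraph m x y).dist (Sum.inr true) (Sum.inl x) = 2 := by
    refine dist_eq_two' (by simp) ?_ ((gm_adj_inl_yp.mpr rfl).symm)
      (gm_adj_inl_inl.mpr (Ne.symm hxy))
    intro h
    exact hxy (gm_adj_inl_yp.mp h.symm)
  have hdiam : (GmGraph m x y).diam = 2 := by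
    apply le_antisymm
    · have : (GmGraph m x y).diam ≤ (2 : ℕ∞).toNat := ENat.toNat_le_toNat hed (by simp)
      simpa using this
    · rw [← hd2]; exact dist_le_diam hne_top
  -- PART 2 : gpNum (GmGraph m x y) = m
  have hgpG : gpNum (GmGraph m x y) = m := by
    apply gpNum_eq_of _ m (Finset.univ.image (Sum.inl : Fin m → Fin m ⊕ Bool))
    · intro u v w hu hv hw huv huw hvw p hp hlen
      simp only [Finset.coe_image, Finset.coe_univ, Set.image_univ, Set.mem_range]
        at hu hv hw
      obtain ⟨a, rfl⟩ := hu
      obtain ⟨b, rfl⟩ := hv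
      have hadj : (GmGraph m x y).Adj (Sum.inl a) (Sum.inl b) :=
        gm_adj_inl_inl.mpr (fun h => huv (by rw [h]))
      rw [SimpleGraph.dist_eq_one_iff_adj.mpr hadj] at hlen
      rw [walk_len1_support p hlen]
      simp only [List.mem_cons, List.mem_singleton, List.not_mem_nil, or_false]
      rintro (h | h)
      · exact huw h.symm
      · exact hvw h.symm
    · rw [Finset.card_image_of_injective _ Sum.inl_injective]; simp
    · intro T hT
      by_contra hc
      push_neg at hc
      have hTle : T.card ≤ m + 2 := by
        have := T.card_le_univ; simpa [hcardV] using this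
      by_cases hy' : (Sum.inr true : Fin m ⊕ Bool) ∈ T
      · by_cases hy : (Sum.inl y : Fin m ⊕ Bool) ∈ T
        · -- find inl c ∈ T with c ≠ y
          set s : Finset (Fin m ⊕ Bool) := {Sum.inr true, Sum.inr false, Sum.inl y}
            with hs
          have h3 : s.card ≤ 3 :=
            (Finset.card_insert_le _ _).trans
              (Nat.succ_le_succ ((Finset.card_insert_le _ _).trans (by simp)))
          have hsd : T.card ≤ (T \ s).card + s.card :=
            Finset.card_le_card_sdiff_add_card
          have hpos : 0 < (T \ s).card := by omega
          obtain ⟨u, hu⟩ := Finset.card_pos.mp hpos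
          rw [Finset.mem_sdiff] at hu
          obtain ⟨huT, hus⟩ := hu
          simp only [hs, Finset.mem_insert, Finset.mem_singleton] at hus
          push_neg at hus
          obtain ⟨h1, h2, h3'⟩ := hus
          obtain (c | b) := u
          · have hcy : c ≠ y := fun h => h3' (by rw [h])
            refine gp_viol hT hy' huT hy (by simp) (by simp) (by simp [hcy]) ?_
              ((gm_adj_inl_yp.mpr rfl).symm) (gm_adj_inl_inl.mpr (Ne.symm hcy))
            intro h
            exact hcy (gm_adj_inl_yp.mp h.symm)
          · cases b
            · exact absurd rfl h2
            · exact absurd rfl h1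
        · -- T misses inl y; everything else is in T
          have hall : ∀ u : Fin m ⊕ Bool, u ≠ Sum.inl y → u ∈ T :=
            fun u hu => mem_of_card_big (by omega) hy hu
          refine gp_viol hT hy' (hall (Sum.inl x) (by simp [hxy]))
            (hall (Sum.inr false) (by simp)) (by simp) (by simp) (by simp) ?_
            gm_adj_xp_yp.symm ((gm_adj_inl_xp.mpr (Or.inl rfl)).symm)
          intro h
          exact hxy (gm_adj_inl_yp.mp h.symm)
      · -- T misses inr true
        have hall : ∀ u : Fin m ⊕ Bool, u ≠ Sum.inr true → u ∈ T :=
          fun u hu => mem_of_card_big (by omega) hy' hu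
        have hc3 : ∃ c : Fin m, c ≠ x ∧ c ≠ y := by
          by_contra h
          push_neg at h
          have hsub : (Finset.univ : Finset (Fin m)) ⊆ {x, y} := by
            intro c _
            simp only [Finset.mem_insert, Finset.mem_singleton]
            by_cases hcx : c = x
            · exact Or.inl hcx
            · exact Or.inr (h c hcx)
          have h1 := Finset.card_le_card hsub
          have h2 : ({x, y} : Finset (Fin m)).card ≤ 2 :=
            (Finset.card_insert_le _ _).trans (by simp)
          simp only [Finset.card_univ, Fintype.card_fin] at h1
          omega
        obtain ⟨c, hcx, hcy⟩ := hc3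
        refine gp_viol hT (hall (Sum.inr false) (by simp)) (hall (Sum.inl c) (by simp))
          (hall (Sum.inl x) (by simp)) (by simp) (by simp) (by simp [hcx]) ?_
          ((gm_adj_inl_xp.mpr (Or.inl rfl)).symm) (gm_adj_inl_inl.mpr (Ne.symm hcx))
        intro h
        rcases gm_adj_inl_xp.mp h.symm with h' | h'
        · exact hcx h'
        · exact hcy h'
  -- PART 3 : gpNum of the edge-deleted graph = m + 1
  have hgpG' : gpNum ((GmGraph m x y).deleteEdges {s(Sum.inl x, Sum.inr false)})
      = m + 1 := by
    apply gpNum_eq_of _ (m + 1) (Finset.univ.erase (Sum.inl y))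
    · intro u v w hu hv hw huv huw hvw p hp hlen
      simp only [Finset.coe_erase, Finset.coe_univ, Set.mem_diff, Set.mem_univ,
        Set.mem_singleton_iff, true_and] at hu hv hw
      have adjCase : ∀ {u' v' : Fin m ⊕ Bool}, w ≠ u' → w ≠ v' →
          ((GmGraph m x y).deleteEdges {s(Sum.inl x, Sum.inr false)}).Adj u' v' →
          ∀ p' : ((GmGraph m x y).deleteEdges {s(Sum.inl x, Sum.inr false)}).Walk u' v',
          p'.length =
            ((GmGraph m x y).deleteEdges {s(Sum.inl x, Sum.inr false)}).dist u' v' →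
          w ∉ p'.support := by
        intro u' v' huw' hvw' hadj p' hlen'
        rw [SimpleGraph.dist_eq_one_iff_adj.mpr hadj] at hlen'
        rw [walk_len1_support p' hlen']
        simp [huw', hvw']
      have midCase : ∀ {u' v' : Fin m ⊕ Bool}, w ≠ u' → w ≠ v' → u' ≠ v' →
          ¬ ((GmGraph m x y).deleteEdges {s(Sum.inl x, Sum.inr false)}).Adj u' v' →
          ((GmGraph m x y).deleteEdges {s(Sum.inl x, Sum.inr false)}).Adj u' (Sum.inl y) →
          ((GmGraph m x y).deleteEdges {s(Sum.inl x, Sum.inr false)}).Adj (Sum.inl y) v' →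
          (∀ z, ((GmGraph m x y).deleteEdges {s(Sum.inl x, Sum.inr false)}).Adj u' z →
            ((GmGraph m x y).deleteEdges {s(Sum.inl x, Sum.inr false)}).Adj z v' →
            z = Sum.inl y) →
          ∀ p' : ((GmGraph m x y).deleteEdges {s(Sum.inl x, Sum.inr false)}).Walk u' v',
          p'.length =
            ((GmGraph m x y).deleteEdges {s(Sum.inl x, Sum.inr false)}).dist u' v' →
          w ∉ p'.support := by
        intro u' v' huw' hvw' hne hna ha hb hmid p' hlen'
        rw [dist_eq_two' hne hna ha hb] at hlen'
        obtain ⟨z, hz1, hz2, hsup⟩ := walk_len2_support p' hlen'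
        rw [hmid z hz1 hz2] at hsup
        rw [hsup]
        simp [huw', hvw', hw]
      cases u with
      | inl a =>
        have ha : a ≠ y := fun h => hu (by rw [h])
        cases v with
        | inl b =>
          exact adjCase (Ne.symm huw) (Ne.symm hvw)
            ((del_il_il a b).mpr (fun h => huv (by rw [h]))) p hlen
        | inr d =>
          cases d with
          | false =>
            refine midCase (Ne.symm huw) (Ne.symm hvw) (by simp) ?_
              ((del_il_il a y).mpr ha) (((del_il_xp hxy y).mpr rfl)) ?_ p hlen
            · intro h; exact ha ((del_il_xp hxy a).mp h)
            · intro z hz1 hz2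
              obtain (c | b) := z
              · exact congrArg _ ((del_il_xp hxy c).mp hz2)
              · cases b
                · exact absurd rfl hz2.ne'
                · exact absurd ((del_il_yp a).mp hz1) ha
          | true =>
            refine midCase (Ne.symm huw) (Ne.symm hvw) (by simp) ?_
              ((del_il_il a y).mpr ha) (((del_il_yp y).mpr rfl)) ?_ p hlen
            · intro h; exact ha ((del_il_yp a).mp h)
            · intro z hz1 hz2
              obtain (c | b) := z
              · exact congrArg _ ((del_il_yp c).mp hz2)
              · cases b
                · exact absurd ((del_il_xp hxy a).mp hz1) ha
                · exact absurd rfl hz2.ne'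
      | inr b =>
        cases b with
        | false =>
          cases v with
          | inl a =>
            have hay : a ≠ y := fun h => hv (by rw [h])
            refine midCase (Ne.symm huw) (Ne.symm hvw) (by simp) ?_
              ((del_il_xp hxy y).mpr rfl).symm ((del_il_il y a).mpr (Ne.symm hay)) ?_ p hlen
            · intro h; exact hay ((del_il_xp hxy a).mp h.symm)
            · intro z hz1 hz2
              obtain (c | b) := z
              · exact congrArg _ ((del_il_xp hxy c).mp hz1.symm)
              · cases b
                · exact absurd rfl hz1.ne'
                · exact absurd ((del_il_yp a).mp hz2.symm) hay
          | inr d =>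
            cases d with
            | false => exact absurd rfl huv
            | true => exact adjCase (Ne.symm huw) (Ne.symm hvw) del_xp_yp p hlen
        | true =>
          cases v with
          | inl a =>
            have hay : a ≠ y := fun h => hv (by rw [h])
            refine midCase (Ne.symm huw) (Ne.symm hvw) (by simp) ?_
              ((del_il_yp y).mpr rfl).symm ((del_il_il y a).mpr (Ne.symm hay)) ?_ p hlen
            · intro h; exact hay ((del_il_yp a).mp h.symm)
            · intro z hz1 hz2
              obtain (c | b) := z
              · exact congrArg _ ((del_il_yp c).mp hz1.symm)
              · cases b
                · exact absurd ((del_il_xp hxy a).mp hz2.symm) hay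
                · exact absurd rfl hz1.ne'
          | inr d =>
            cases d with
            | false => exact adjCase (Ne.symm huw) (Ne.symm hvw) del_xp_yp.symm p hlen
            | true => exact absurd rfl huv
    · rw [Finset.card_erase_of_mem (Finset.mem_univ _)]
      simp [hcardV]
    · intro T hT
      by_contra hc
      push_neg at hc
      have hTle : T.card ≤ m + 2 := by
        have := T.card_le_univ; simpa [hcardV] using this
      have hTuniv : T = Finset.univ :=
        Finset.eq_univ_of_card T (by rw [hcardV]; omega)
      have hmem : ∀ u : Fin m ⊕ Bool, u ∈ T := fun u => hTuniv ▸ Finset.mem_univ u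
      refine gp_viol hT (hmem (Sum.inr true)) (hmem (Sum.inl x)) (hmem (Sum.inl y))
        (by simp) (by simp) (by simp [hxy]) ?_
        ((del_il_yp y).mpr rfl).symm ((del_il_il y x).mpr (Ne.symm hxy))
      intro h
      exact hxy ((del_il_yp x).mp h.symm)
  exact ⟨hdiam, hgpG, hgpG', by rw [hgpG, hgpG']⟩
end
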